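/- Let w be of minimal length in its conjugacy class in W, J = J(w), and suppose x ∈ X_J satisfies ℓ(x⁻¹wx) = ℓ(w). Then J(x⁻¹wx) = x⁻¹ J x. -/

import Mathlib

/-!
A left inversion `t` of `w` lies in the parabolic subgroup `W_J`, `J = J(w)`, and, since `x ∈ X_J`,
it is also a left inversion of `w x = x (x⁻¹ w x)`. By the strong exchange condition a left
inversion `t` of a product `x v` is either a left inversion of `x`, impossible here as
`ℓ(t x) = ℓ(t) + ℓ(x)`, or `x⁻¹ t x` is a left inversion of `v`. So conjugation by
`x` maps the inversion set of `w` into that of `x⁻¹ w x`; both have `ℓ(w)` elements, so it is a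
bijection. The inversion set of `w` generates `W_{J(w)}`, hence `x⁻¹ W_J x = W_{J(x⁻¹ w x)}`.
Conjugation by `x` preserves length on `W_J`, because `x` and `x⁻¹` are minimal coset
representatives for the two parabolic subgroups, and the simple reflections of a parabolic
subgroup are its elements of length one.

Strong exchange comes from Humphreys' action of `W` on `W × ZMod 2` (Reflection groups and Coxeter
groups, §5.8), which shows that the parity of the number of occurrences of `t` in the inversion
sequence of a word depends only on the product of the word.
-/

/-- The set `J(w)` of simple reflections occurring in a reduced expression for `w`. -/
def coxSupport {B W : Type*} [Group W] {M : CoxeterMatrix B}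
    (cs : CoxeterSystem M W) (w : W) : Set B :=
  {b : B | ∃ ω : List B, cs.IsReduced ω ∧ cs.wordProd ω = w ∧ b ∈ ω}

theorem mul_mul_inv_eq_iff {G : Type*} [Group G] (g u y : G) :
    g * u * g⁻¹ = y ↔ u = g⁻¹ * y * g := by
  constructor <;> rintro rfl <;> group

namespace CoxeterSystem

open List

variable {B W : Type*} [Group W] {M : CoxeterMatrix B} (cs : CoxeterSystem M W)

local prefix:100 "s " => cs.simple
local prefix:100 "π " => cs.wordProd
local prefix:100 "ℓ " => cs.length
local prefix:100 "ris " => cs.rightInvSeq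
local prefix:100 "lis " => cs.leftInvSeq

theorem simple_mul_mul_simple_eq_iff (j : B) (v y : W) :
    s j * v * s j = y ↔ v = s j * y * s j := by
  simpa [inv_simple] using mul_mul_inv_eq_iff (s j) v y

open scoped Classical in
noncomputable def conjSign (i : B) : Equiv.Perm (W × ZMod 2) :=
  Function.Involutive.toPerm (fun p => (s i * p.1 * s i, p.2 + if p.1 = s i then 1 else 0)) <| by
    rintro ⟨u, e⟩
    simp only [simple_mul_mul_simple_eq_iff, simple_mul_simple_cancel_right, add_assoc,
      CharTwo.add_self_eq_zero, add_zero]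
    simp [mul_assoc, simple_mul_simple_cancel_left]

open scoped Classical in
theorem conjSign_apply (i : B) (u : W) (e : ZMod 2) :
    conjSign cs i (u, e) = (s i * u * s i, e + if u = s i then 1 else 0) := rfl

theorem inv_pow_mul_pow_conj (i j : B) (m k : ℕ) :
    ((s i * s j) ^ m)⁻¹ * ((s j * s i) ^ k * s j) * (s i * s j) ^ m =
      (s j * s i) ^ (2 * m + k) * s j := by
  have hsemi : SemiconjBy (s j) (s i * s j) (s j * s i) := by simp [SemiconjBy, mul_assoc]
  rw [mul_assoc, mul_assoc, (hsemi.pow_right m).eq, ← inv_pow, mul_inv_rev, inv_simple, inv_simple,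
    ← mul_assoc, ← mul_assoc, ← pow_add, ← pow_add, two_mul, add_right_comm]

open scoped Classical in
theorem conjSign_mul_pow_apply (i j : B) (m : ℕ) (u : W) (e : ZMod 2) :
    ((conjSign cs i * conjSign cs j) ^ m) (u, e) = ((s i * s j) ^ m * u * ((s i * s j) ^ m)⁻¹,
      e + ∑ n ∈ Finset.range (2 * m), if u = (s j * s i) ^ n * s j then 1 else 0) := by
  induction m with
  | zero => simp
  | succ m ih =>
    set v := (s i * s j) ^ m * u * ((s i * s j) ^ m)⁻¹
    have h0 : v = s j ↔ u = (s j * s i) ^ (2 * m) * s j := by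
      have := inv_pow_mul_pow_conj cs i j m 0
      rw [pow_zero, one_mul, add_zero] at this
      rw [mul_mul_inv_eq_iff, this]
    have h1 : s j * v * s j = s i ↔ u = (s j * s i) ^ (2 * m + 1) * s j := by
      rw [simple_mul_mul_simple_eq_iff, mul_mul_inv_eq_iff, ← inv_pow_mul_pow_conj cs i j m 1,
        pow_one, mul_assoc (s j)]
    rw [pow_succ', Equiv.Perm.mul_apply, Equiv.Perm.mul_apply, ih, conjSign_apply, conjSign_apply,
      h0, h1, show 2 * (m + 1) = 2 * m + 1 + 1 by ring, Finset.sum_range_succ,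
      Finset.sum_range_succ]
    refine Prod.ext ?_ (by simp only [add_assoc])
    simp only [v, pow_succ', mul_inv_rev, inv_simple, mul_assoc]

theorem isLiftable_conjSign : M.IsLiftable (conjSign cs) := by
  intro i j
  ext ⟨u, e⟩ : 1
  rw [conjSign_mul_pow_apply, simple_mul_simple_pow, two_mul, Finset.sum_range_add]
  classical
  simp only [pow_add, simple_mul_simple_pow', one_mul, inv_one, mul_one, CharTwo.add_self_eq_zero,
    add_zero, Equiv.Perm.one_apply]

noncomputable def permRep : W →* Equiv.Perm (W × ZMod 2) :=
  cs.lift ⟨conjSign cs, isLiftable_conjSign cs⟩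

theorem permRep_simple (i : B) : permRep cs (s i) = conjSign cs i :=
  cs.lift_apply_simple (isLiftable_conjSign cs) i

noncomputable def invParity (w u : W) : ZMod 2 := (permRep cs w (u, 0)).2

theorem permRep_apply (w u : W) (e : ZMod 2) :
    permRep cs w (u, e) = (w * u * w⁻¹, e + invParity cs w u) := by
  induction w using cs.simple_induction_left generalizing u e with
  | one => simp [invParity]
  | mul_simple_left w i ih =>
    rw [invParity, map_mul, Equiv.Perm.mul_apply, Equiv.Perm.mul_apply, ih, ih, permRep_simple,
      conjSign_apply, conjSign_apply]
    simp only [mul_inv_rev, inv_simple, mul_assoc, zero_add, add_assoc]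

theorem invParity_mul (w w' u : W) :
    invParity cs (w * w') u = invParity cs w' u + invParity cs w (w' * u * w'⁻¹) := by
  simp only [invParity, map_mul, Equiv.Perm.mul_apply]
  rw [permRep_apply cs w', permRep_apply cs w]
  simp [invParity]

theorem invParity_one (u : W) : invParity cs 1 u = 0 := by simp [invParity]

open scoped Classical in
theorem invParity_simple (i : B) (u : W) : invParity cs (s i) u = if u = s i then 1 else 0 := by
  simp [invParity, permRep_simple, conjSign_apply]

open scoped Classical in
theorem invParity_wordProd (ω : List B) (u : W) :
    invParity cs (π ω) u = (ris ω).count u := by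
  induction ω generalizing u with
  | nil => simp [invParity_one]
  | cons i ω ih =>
    have hcond : (π ω)⁻¹ * s i * π ω = u ↔ π ω * u * (π ω)⁻¹ = s i := by
      rw [mul_mul_inv_eq_iff, eq_comm]
    simp only [wordProd_cons, invParity_mul, ih, invParity_simple, rightInvSeq, count_cons,
      beq_iff_eq, hcond]
    push_cast
    rfl

theorem IsReflection.invParity_self {t : W} (ht : cs.IsReflection t) : invParity cs t t = 1 := by
  obtain ⟨g, a, rfl⟩ := ht
  have hconj : g⁻¹ * (g * s a * g⁻¹) * g⁻¹⁻¹ = s a := by group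
  have hcancel := invParity_mul cs g g⁻¹ (g * s a * g⁻¹)
  rw [mul_inv_cancel, invParity_one, hconj] at hcancel
  rw [invParity_mul, hconj, invParity_mul, invParity_simple, if_pos rfl, inv_simple,
    simple_mul_simple_cancel_right]
  linear_combination -hcancel

theorem mem_rightInvSeq_of_isRightInversion {ω : List B} {t : W}
    (ht : cs.IsRightInversion (π ω) t) : t ∈ ris ω := by
  classical
  by_contra hnot
  obtain ⟨ρ, hρ, hρω⟩ := cs.exists_isReduced (π ω * t)
  have hparity : invParity cs (π ρ) t = 1 := by
    have h := invParity_mul cs (π ω * t) t t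
    rw [mul_assoc, ht.1.mul_self, mul_one, invParity_wordProd, count_eq_zero.mpr hnot,
      ht.1.inv, one_mul, Nat.cast_zero, ht.1.invParity_self, hρω] at h
    linear_combination -h - (by decide : (2 : ZMod 2) = 0)
  have hmem : t ∈ ris ρ := by
    by_contra h
    rw [invParity_wordProd, count_eq_zero.mpr h] at hparity
    exact zero_ne_one (by exact_mod_cast hparity)
  have hlt := (cs.isRightInversion_of_mem_rightInvSeq hρ hmem).2
  rw [← hρω, mul_assoc, ht.1.mul_self, mul_one] at hlt
  exact lt_asymm ht.2 hlt

theorem mem_leftInvSeq_of_isLeftInversion {ω : List B} {t : W}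
    (ht : cs.IsLeftInversion (π ω) t) : t ∈ lis ω := by
  rw [← isRightInversion_inv_iff, ← wordProd_reverse] at ht
  simpa [rightInvSeq_reverse] using cs.mem_rightInvSeq_of_isRightInversion ht

theorem leftInvSeq_append (ω ω' : List B) :
    lis (ω ++ ω') = lis ω ++ (lis ω').map (MulAut.conj (π ω)) := by
  induction ω with
  | nil => simp
  | cons i ω ih =>
    simp [leftInvSeq, ih, wordProd_cons, map_map, Function.comp_def, mul_assoc]

theorem isLeftInversion_or_of_isLeftInversion_mul {u y t : W}
    (ht : cs.IsLeftInversion (u * y) t) :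
    cs.IsLeftInversion u t ∨ cs.IsLeftInversion y (u⁻¹ * t * u) := by
  obtain ⟨γ, hγ, rfl⟩ := cs.exists_isReduced u
  obtain ⟨α, hα, rfl⟩ := cs.exists_isReduced y
  rw [← wordProd_append] at ht
  have hmem := cs.mem_leftInvSeq_of_isLeftInversion ht
  rw [leftInvSeq_append] at hmem
  rcases mem_append.mp hmem with h | h
  · exact Or.inl (cs.isLeftInversion_of_mem_leftInvSeq hγ h)
  · obtain ⟨r, hr, rfl⟩ := mem_map.mp h
    right
    simpa [mul_assoc] using cs.isLeftInversion_of_mem_leftInvSeq hα hr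

def leftInversionSet (w : W) : Set W := {t | cs.IsLeftInversion w t}

theorem leftInversionSet_wordProd {ω : List B} (hω : cs.IsReduced ω) :
    cs.leftInversionSet (π ω) = {t | t ∈ lis ω} :=
  Set.ext fun _ => ⟨cs.mem_leftInvSeq_of_isLeftInversion, cs.isLeftInversion_of_mem_leftInvSeq hω⟩

theorem finite_leftInversionSet (w : W) : (cs.leftInversionSet w).Finite := by
  obtain ⟨ω, hω, rfl⟩ := cs.exists_isReduced w
  rw [leftInversionSet_wordProd cs hω]
  exact (lis ω).finite_toSet

theorem ncard_leftInversionSet (w : W) : (cs.leftInversionSet w).ncard = ℓ w := by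
  classical
  obtain ⟨ω, hω, rfl⟩ := cs.exists_isReduced w
  rw [leftInversionSet_wordProd cs hω, ← List.coe_toFinset, Set.ncard_coe_finset,
    List.toFinset_card_of_nodup hω.nodup_leftInvSeq, length_leftInvSeq, hω.eq]

def parabolicSubgroup (J : Set B) : Subgroup W := Subgroup.closure (cs.simple '' J)

variable {cs}

theorem simple_mem_parabolicSubgroup {J : Set B} {b : B} (hb : b ∈ J) :
    s b ∈ cs.parabolicSubgroup J :=
  Subgroup.subset_closure ⟨b, hb, rfl⟩

theorem wordProd_mem_parabolicSubgroup {J : Set B} {ω : List B} (hω : ∀ b ∈ ω, b ∈ J) :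
    π ω ∈ cs.parabolicSubgroup J := by
  induction ω with
  | nil => exact one_mem _
  | cons i ω ih =>
    rw [wordProd_cons]
    exact mul_mem (simple_mem_parabolicSubgroup (hω i (mem_cons_self ..)))
      (ih fun b hb => hω b (mem_cons_of_mem i hb))

theorem exists_word_of_mem_parabolicSubgroup {J : Set B} {u : W}
    (hu : u ∈ cs.parabolicSubgroup J) :
    ∃ ω : List B, (∀ b ∈ ω, b ∈ J) ∧ π ω = u := by
  induction hu using Subgroup.closure_induction with
  | mem _ h =>
    obtain ⟨b, hb, rfl⟩ := h
    exact ⟨[b], by simpa using hb, wordProd_singleton cs b⟩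
  | one => exact ⟨[], by simp, rfl⟩
  | mul _ _ _ _ h₁ h₂ =>
    obtain ⟨ω₁, hω₁, rfl⟩ := h₁
    obtain ⟨ω₂, hω₂, rfl⟩ := h₂
    exact ⟨ω₁ ++ ω₂, fun b hb => (mem_append.mp hb).elim (hω₁ b) (hω₂ b), wordProd_append cs ω₁ ω₂⟩
  | inv _ _ h =>
    obtain ⟨ω, hω, rfl⟩ := h
    exact ⟨ω.reverse, fun b hb => hω b (mem_reverse.mp hb), wordProd_reverse cs ω⟩

theorem exists_isReduced_subset (ω : List B) :
    ∃ ω' : List B, cs.IsReduced ω' ∧ π ω' = π ω ∧ ω' ⊆ ω := by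
  induction ω with
  | nil => exact ⟨[], by simp [IsReduced], rfl, List.Subset.refl _⟩
  | cons i ω ih =>
    obtain ⟨ω', hω', hπ, hsub⟩ := ih
    rcases cs.length_simple_mul (π ω') i with hup | hdown
    · refine ⟨i :: ω', ?_, by rw [wordProd_cons, wordProd_cons, hπ], List.cons_subset_cons i hsub⟩
      rw [IsReduced, wordProd_cons, hup, hω'.eq, length_cons]
    · have hinv : cs.IsLeftInversion (π ω') (s i) := ⟨cs.isReflection_simple i, by omega⟩
      obtain ⟨j, hj, hsj⟩ := List.mem_iff_getElem.mp (cs.mem_leftInvSeq_of_isLeftInversion hinv)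
      have herase := cs.getD_leftInvSeq_mul_wordProd ω' j
      rw [List.getD_eq_getElem _ 1 hj, hsj] at herase
      rw [length_leftInvSeq] at hj
      refine ⟨ω'.eraseIdx j, ?_, by rw [← herase, wordProd_cons, hπ], ?_⟩
      · rw [IsReduced, ← herase, List.length_eraseIdx_of_lt hj]
        have := hω'.eq
        omega
      · exact List.Subset.trans List.eraseIdx_subset (List.subset_cons_of_subset i hsub)

theorem exists_isReduced_of_mem_parabolicSubgroup {J : Set B} {u : W}
    (hu : u ∈ cs.parabolicSubgroup J) :
    ∃ ω : List B, cs.IsReduced ω ∧ (∀ b ∈ ω, b ∈ J) ∧ π ω = u := by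
  obtain ⟨ω, hω, rfl⟩ := exists_word_of_mem_parabolicSubgroup hu
  obtain ⟨ω', hω', hπ, hsub⟩ := cs.exists_isReduced_subset ω
  exact ⟨ω', hω', fun b hb => hω b (hsub hb), hπ⟩

theorem simple_image_eq (J : Set B) :
    cs.simple '' J = {u | u ∈ cs.parabolicSubgroup J ∧ ℓ u = 1} := by
  ext u
  refine ⟨?_, fun ⟨hu, hu1⟩ => ?_⟩
  · rintro ⟨b, hb, rfl⟩
    exact ⟨simple_mem_parabolicSubgroup hb, cs.length_simple b⟩
  · obtain ⟨ω, hω, hJ, rfl⟩ := exists_isReduced_of_mem_parabolicSubgroup hu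
    rw [hω.eq] at hu1
    obtain ⟨b, rfl⟩ := List.length_eq_one_iff.mp hu1
    exact ⟨b, hJ b (mem_singleton_self b), (wordProd_singleton cs b).symm⟩

theorem length_mul_eq_of_forall_le {J : Set B} {x : W}
    (hx : ∀ u ∈ cs.parabolicSubgroup J, ℓ x ≤ ℓ (u * x)) {u : W}
    (hu : u ∈ cs.parabolicSubgroup J) : ℓ (u * x) = ℓ u + ℓ x := by
  obtain ⟨ω, hω, hJ, rfl⟩ := exists_isReduced_of_mem_parabolicSubgroup hu
  clear hu
  induction ω with
  | nil => simp
  | cons b ω ih =>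
    have hω' : cs.IsReduced ω := by simpa using hω.drop 1
    have hJ' : ∀ c ∈ ω, c ∈ J := fun c hc => hJ c (mem_cons_of_mem b hc)
    have hlen := ih hω' hJ'
    rw [hω.eq, length_cons, wordProd_cons, mul_assoc]
    rw [hω'.eq] at hlen
    rcases cs.length_simple_mul (π ω * x) b with hup | hdown
    · omega
    · exfalso
      have hinv : cs.IsLeftInversion (π ω * x) (s b) := ⟨cs.isReflection_simple b, by omega⟩
      rcases cs.isLeftInversion_or_of_isLeftInversion_mul hinv with h | h
      · have := h.2
        rw [← wordProd_cons, hω.eq, hω'.eq, length_cons] at this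
        omega
      · have hmem : (π ω)⁻¹ * s b * π ω ∈ cs.parabolicSubgroup J :=
          mul_mem (mul_mem (inv_mem (wordProd_mem_parabolicSubgroup hJ'))
            (simple_mem_parabolicSubgroup (hJ b (mem_cons_self ..))))
            (wordProd_mem_parabolicSubgroup hJ')
        exact absurd h.2 (not_lt.mpr (hx _ hmem))

theorem length_mul_eq_of_forall_lt {J : Set B} {x : W} (hx : ∀ b ∈ J, ℓ x < ℓ (s b * x)) {u : W}
    (hu : u ∈ cs.parabolicSubgroup J) : ℓ (u * x) = ℓ u + ℓ x := by
  obtain ⟨u₀, hu₀, hmin⟩ := (InvImage.wf (fun u => ℓ (u * x)) wellFounded_lt).has_min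
    (cs.parabolicSubgroup J : Set W) ⟨1, one_mem _⟩
  have hadd : ∀ u ∈ cs.parabolicSubgroup J, ℓ (u * (u₀ * x)) = ℓ u + ℓ (u₀ * x) := by
    refine fun u hu => length_mul_eq_of_forall_le (fun u hu => ?_) hu
    simpa [mul_assoc] using
      le_of_not_gt (hmin (u * u₀) (mul_mem hu hu₀) : ¬ℓ (u * u₀ * x) < ℓ (u₀ * x))
  -- `u₀ x` has minimal length in `W_J x`; if `u₀ ≠ 1`, the first letter of a reduced word for
  -- `u₀⁻¹` would be a left descent of `x` in `J`.
  suffices u₀ = 1 by simpa [this] using hadd u hu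
  obtain ⟨ω, hω, hJ, hπ⟩ := exists_isReduced_of_mem_parabolicSubgroup (inv_mem hu₀)
  cases ω with
  | nil => simpa using hπ.symm
  | cons b ω =>
    exfalso
    have hJ' : ∀ c ∈ ω, c ∈ J := fun c hc => hJ c (mem_cons_of_mem b hc)
    have hx₀ : ℓ x = ω.length + 1 + ℓ (u₀ * x) := by
      rw [← length_cons, ← hω.eq, hπ, ← hadd _ (inv_mem hu₀), inv_mul_cancel_left]
    have hbx : ℓ (s b * x) = ω.length + ℓ (u₀ * x) := by
      have hω' : cs.IsReduced ω := by simpa using hω.drop 1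
      have hsx : s b * x = π ω * (u₀ * x) := by
        rw [← simple_mul_simple_cancel_left cs b (w := π ω), ← wordProd_cons, hπ]
        group
      rw [hsx, hadd _ (wordProd_mem_parabolicSubgroup hJ'), hω'.eq]
    have := hx b (hJ b (mem_cons_self ..))
    omega

theorem closure_leftInvSeq (ω : List B) :
    Subgroup.closure {t | t ∈ lis ω} = cs.parabolicSubgroup {b | b ∈ ω} := by
  refine le_antisymm ((Subgroup.closure_le _).mpr ?_) ((Subgroup.closure_le _).mpr ?_)
  · intro t ht
    obtain ⟨j, hj, rfl⟩ := List.mem_iff_getElem.mp ht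
    rw [length_leftInvSeq] at hj
    rw [getElem_leftInvSeq cs ω j hj]
    have hpre : π (ω.take j) ∈ cs.parabolicSubgroup {b | b ∈ ω} :=
      wordProd_mem_parabolicSubgroup fun b hb => mem_of_mem_take hb
    exact mul_mem (mul_mem hpre (simple_mem_parabolicSubgroup (getElem_mem hj))) (inv_mem hpre)
  · rintro _ ⟨b, hb, rfl⟩
    obtain ⟨j, hj, rfl⟩ := List.mem_iff_getElem.mp hb
    have hpre : ∀ k, π (ω.take k) ∈ Subgroup.closure {t | t ∈ lis ω} := fun k => by
      rw [← inv_inv (π _), ← prod_leftInvSeq, leftInvSeq_take]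
      exact inv_mem <|
        Subgroup.list_prod_mem _ fun t ht => Subgroup.subset_closure (mem_of_mem_take ht)
    have hsucc : π (ω.take (j + 1)) = π (ω.take j) * s ω[j] := by
      rw [take_add_one, getElem?_eq_getElem hj, Option.toList_some, wordProd_append,
        wordProd_singleton]
    have := mul_mem (inv_mem (hpre j)) (hpre (j + 1))
    rwa [hsucc, inv_mul_cancel_left] at this

theorem parabolicSubgroup_coxSupport (w : W) :
    cs.parabolicSubgroup (coxSupport cs w) = Subgroup.closure (cs.leftInversionSet w) := by
  obtain ⟨β, hβ, rfl⟩ := cs.exists_isReduced w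
  rw [leftInversionSet_wordProd cs hβ, closure_leftInvSeq]
  refine le_antisymm ((Subgroup.closure_le _).mpr ?_) (Subgroup.closure_mono ?_)
  · rintro _ ⟨b, ⟨β', hβ', hπ', hb⟩, rfl⟩
    have := simple_mem_parabolicSubgroup (cs := cs) (J := {b | b ∈ β'}) hb
    rwa [← closure_leftInvSeq, ← leftInversionSet_wordProd cs hβ', hπ',
      leftInversionSet_wordProd cs hβ, closure_leftInvSeq] at this
  · exact Set.image_mono fun b hb => ⟨β, hβ, rfl, hb⟩

theorem mem_parabolicSubgroup_coxSupport (w : W) : w ∈ cs.parabolicSubgroup (coxSupport cs w) := by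
  obtain ⟨β, hβ, rfl⟩ := cs.exists_isReduced w
  exact wordProd_mem_parabolicSubgroup fun b hb => ⟨β, hβ, rfl, hb⟩

theorem image_conj_leftInversionSet {w x : W} (hx : ∀ b ∈ coxSupport cs w, ℓ x < ℓ (s b * x))
    (hlen : ℓ (x⁻¹ * w * x) = ℓ w) :
    (fun t => x⁻¹ * t * x) '' cs.leftInversionSet w = cs.leftInversionSet (x⁻¹ * w * x) := by
  have hwJ := mem_parabolicSubgroup_coxSupport (cs := cs) w
  have hsubset : (fun t => x⁻¹ * t * x) '' cs.leftInversionSet w ⊆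
      cs.leftInversionSet (x⁻¹ * w * x) := by
    rintro _ ⟨t, ht, rfl⟩
    have htJ : t ∈ cs.parabolicSubgroup (coxSupport cs w) := by
      rw [parabolicSubgroup_coxSupport]
      exact Subgroup.subset_closure ht
    have htx := length_mul_eq_of_forall_lt hx htJ
    have htwx : cs.IsLeftInversion (x * (x⁻¹ * w * x)) t := by
      refine ⟨ht.1, ?_⟩
      rw [show x * (x⁻¹ * w * x) = w * x by group, ← mul_assoc,
        length_mul_eq_of_forall_lt hx (mul_mem htJ hwJ),
        length_mul_eq_of_forall_lt hx hwJ]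
      exact Nat.add_lt_add_right ht.2 _
    rcases cs.isLeftInversion_or_of_isLeftInversion_mul htwx with h | h
    · exact absurd h.2 (by omega)
    · exact h
  refine Set.eq_of_subset_of_ncard_le hsubset ?_ (cs.finite_leftInversionSet _)
  have hinj : Function.Injective fun t => x⁻¹ * t * x := fun a b h => by simpa using h
  rw [Set.ncard_image_of_injective _ hinj, ncard_leftInversionSet, ncard_leftInversionSet, hlen]

theorem mem_parabolicSubgroup_coxSupport_conj_iff {w x : W}
    (hx : ∀ b ∈ coxSupport cs w, ℓ x < ℓ (s b * x)) (hlen : ℓ (x⁻¹ * w * x) = ℓ w) (u : W) :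
    u ∈ cs.parabolicSubgroup (coxSupport cs (x⁻¹ * w * x)) ↔
      x * u * x⁻¹ ∈ cs.parabolicSubgroup (coxSupport cs w) := by
  have hconj : (fun t => x⁻¹ * t * x) = (MulAut.conj x⁻¹).toMonoidHom := by
    ext t
    simp
  rw [parabolicSubgroup_coxSupport, parabolicSubgroup_coxSupport,
    ← image_conj_leftInversionSet hx hlen, hconj, ← MonoidHom.map_closure, Subgroup.mem_map_equiv]
  simp

theorem length_conj_eq {J K : Set B} {x : W} (hx : ∀ b ∈ J, ℓ x < ℓ (s b * x))
    (hJK : ∀ u, u ∈ cs.parabolicSubgroup K ↔ x * u * x⁻¹ ∈ cs.parabolicSubgroup J) {u : W}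
    (hu : u ∈ cs.parabolicSubgroup J) : ℓ (x⁻¹ * u * x) = ℓ u := by
  have hxK : ∀ k ∈ K, ℓ x⁻¹ < ℓ (s k * x⁻¹) := by
    intro k hk
    have hmem := (hJK (s k)).mp (simple_mem_parabolicSubgroup hk)
    have hpos := ((cs.isReflection_simple k).conj x).odd_length.pos
    calc ℓ x⁻¹ = ℓ x := cs.length_inv x
      _ < ℓ (x * s k * x⁻¹ * x) := by rw [length_mul_eq_of_forall_lt hx hmem]; omega
      _ = ℓ (s k * x⁻¹) := by rw [inv_mul_cancel_right, ← cs.length_inv, mul_inv_rev, inv_simple]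
  have hy : x⁻¹ * u * x ∈ cs.parabolicSubgroup K := (hJK _).mpr (by group; exact hu)
  have h₁ := length_mul_eq_of_forall_lt hx hu
  have h₂ := length_mul_eq_of_forall_lt hxK (inv_mem hy)
  rw [show (x⁻¹ * u * x)⁻¹ * x⁻¹ = (u * x)⁻¹ by group, cs.length_inv, cs.length_inv,
    cs.length_inv] at h₂
  omega

end CoxeterSystem

theorem stmt_5_general {B W : Type*} [Group W] {M : CoxeterMatrix B}
    (cs : CoxeterSystem M W) (w : W)
    (x : W)
    (hx : ∀ b ∈ coxSupport cs w, cs.length x < cs.length (cs.simple b * x))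
    (hlen : cs.length (x⁻¹ * w * x) = cs.length w) :
    cs.simple '' coxSupport cs (x⁻¹ * w * x) =
      (fun g => x⁻¹ * g * x) '' (cs.simple '' coxSupport cs w) := by
  have hconj := cs.mem_parabolicSubgroup_coxSupport_conj_iff hx hlen
  rw [cs.simple_image_eq, cs.simple_image_eq]
  ext z
  constructor
  · rintro ⟨hz, hz1⟩
    refine ⟨x * z * x⁻¹, ⟨(hconj z).mp hz, ?_⟩, by group⟩
    rw [← cs.length_conj_eq hx hconj ((hconj z).mp hz)]
    simpa [mul_assoc] using hz1
  · rintro ⟨u, ⟨hu, hu1⟩, rfl⟩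
    exact ⟨(hconj _).mpr (by group; exact hu), (cs.length_conj_eq hx hconj hu).trans hu1⟩

/-- If `w` has minimal length in its conjugacy class, `x ∈ X_{J(w)}` and
`ℓ(x⁻¹ w x) = ℓ(w)`, then `J(x⁻¹ w x) = x⁻¹ J(w) x` (as sets of simple reflections). -/
theorem stmt_5 {B W : Type*} [Group W] [Finite W] {M : CoxeterMatrix B}
    (cs : CoxeterSystem M W) (w : W)
    (hmin : ∀ v : W, cs.length w ≤ cs.length (v⁻¹ * w * v))
    (x : W)
    (hx : ∀ b ∈ coxSupport cs w, cs.length x < cs.length (cs.simple b * x))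
    (hlen : cs.length (x⁻¹ * w * x) = cs.length w) :
    cs.simple '' coxSupport cs (x⁻¹ * w * x) =
      (fun g => x⁻¹ * g * x) '' (cs.simple '' coxSupport cs w) :=
  stmt_5_general cs w x hx hlen
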